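/- Let β, ρ > 0 and λ < ρ be real numbers. Then there exists a constant D > 0 such that for all real t₁ < t₂, the oscillatory integral I(t₁,t₂) = ∫_{t₁}^{t₂} e^{λt} e^{iβ e^{ρt}} dt satisfies |I(t₁,t₂)| ≤ D (e^{(λ-ρ)t₁} + e^{(λ-ρ)t₂}). In fact one may take D = 1/(ρβ). -/

import Mathlib

/-!
With `φ t = β e^{ρt}` and `r = (ρ - λ)/ρ > 0`, the integrand is a constant multiple of
`φ' φ^{-r} e^{iφ}`. Writing `φ^{-r} e^{iφ} = Γ(r)⁻¹ ∫₀^∞ s^{r-1} e^{(i-s)φ} ds` and swapping the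
integrals, the `t`-integral becomes exact, `[e^{(i-s)φ} / (i-s)]` between the endpoints, of modulus
at most `e^{-sφ(t₁)} + e^{-sφ(t₂)}` because `|i - s| ≥ 1`. Integrating this bound in `s` gives back
`Γ(r) (φ(t₁)^{-r} + φ(t₂)^{-r})`, which cancels the factor `Γ(r)⁻¹`.
-/

open MeasureTheory intervalIntegral Set

lemma integrableOn_rpow_sub_one_mul_exp_neg_mul {r x : ℝ} (hr : 0 < r) (hx : 0 < x) :
    IntegrableOn (fun s : ℝ => s ^ (r - 1) * Real.exp (-(x * s))) (Ioi 0) := by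
  simpa [Real.rpow_one, neg_mul] using
    integrableOn_rpow_mul_exp_neg_mul_rpow (by linarith : -1 < r - 1) one_pos hx

lemma integral_rpow_sub_one_mul_exp_neg_mul {r x : ℝ} (hr : 0 < r) (hx : 0 < x) :
    ∫ s in Ioi 0, s ^ (r - 1) * Real.exp (-(x * s)) = Real.Gamma r * x ^ (-r) := by
  rw [Real.integral_rpow_mul_exp_neg_mul_Ioi hr hx, one_div, Real.inv_rpow hx.le,
    Real.rpow_neg hx.le, mul_comm]

lemma cexp_I_sub_mul (s x : ℝ) :
    Complex.exp ((Complex.I - s) * x) =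
      (Real.exp (-(x * s)) : ℂ) * Complex.exp (Complex.I * x) := by
  rw [Complex.ofReal_exp, ← Complex.exp_add]
  push_cast
  ring_nf

lemma norm_cexp_I_sub_mul (s x : ℝ) :
    ‖Complex.exp ((Complex.I - s) * x)‖ = Real.exp (-(x * s)) := by
  rw [cexp_I_sub_mul, norm_mul, Complex.norm_exp_I_mul_ofReal, mul_one, Complex.norm_real,
    Real.norm_of_nonneg (Real.exp_nonneg _)]

lemma one_le_norm_I_sub_ofReal (s : ℝ) : 1 ≤ ‖Complex.I - s‖ := by
  simpa using Complex.abs_im_le_norm (Complex.I - s)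

lemma integral_deriv_mul_cexp_mul {φ φ' : ℝ → ℝ} {a b : ℝ} {c : ℂ} (hc : c ≠ 0)
    (hφ : ∀ t ∈ uIcc a b, HasDerivAt φ (φ' t) t) (hφ' : ContinuousOn φ' (uIcc a b)) :
    ∫ t in a..b, (φ' t : ℂ) * Complex.exp (c * φ t) =
      (Complex.exp (c * φ b) - Complex.exp (c * φ a)) / c := by
  rw [sub_div]
  refine integral_eq_sub_of_hasDerivAt (f := fun t => Complex.exp (c * φ t) / c)
    (fun t ht => ?_) ?_
  · exact (((hφ t ht).ofReal_comp.const_mul c).cexp.div_const c).congr_deriv (by field_simp)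
  · have hφc : ContinuousOn φ (uIcc a b) := HasDerivAt.continuousOn hφ
    refine ContinuousOn.intervalIntegrable ?_
    exact (Complex.continuous_ofReal.comp_continuousOn hφ').mul
      (Complex.continuous_exp.comp_continuousOn
        (continuousOn_const.mul (Complex.continuous_ofReal.comp_continuousOn hφc)))

lemma norm_integral_deriv_mul_cexp_I_sub_mul_le {φ φ' : ℝ → ℝ} {a b : ℝ} (s : ℝ)
    (hφ : ∀ t ∈ uIcc a b, HasDerivAt φ (φ' t) t) (hφ' : ContinuousOn φ' (uIcc a b)) :
    ‖∫ t in a..b, (φ' t : ℂ) * Complex.exp ((Complex.I - s) * φ t)‖ ≤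
      Real.exp (-(φ a * s)) + Real.exp (-(φ b * s)) := by
  have hs : 1 ≤ ‖Complex.I - s‖ := one_le_norm_I_sub_ofReal s
  rw [integral_deriv_mul_cexp_mul (norm_pos_iff.mp (one_pos.trans_le hs)) hφ hφ', norm_div]
  calc _ ≤ ‖Complex.exp ((Complex.I - s) * φ b) - Complex.exp ((Complex.I - s) * φ a)‖ :=
        div_le_self (norm_nonneg _) hs
    _ ≤ _ := norm_sub_le _ _
    _ = _ := by rw [norm_cexp_I_sub_mul, norm_cexp_I_sub_mul, add_comm]

lemma rpow_neg_mul_cexp_I_eq_integral {r x : ℝ} (hr : 0 < r) (hx : 0 < x) :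
    ((x ^ (-r) : ℝ) : ℂ) * Complex.exp (Complex.I * x) =
      ((Real.Gamma r)⁻¹ : ℝ) *
        ∫ s in Ioi 0, ((s ^ (r - 1) : ℝ) : ℂ) * Complex.exp ((Complex.I - s) * x) := by
  have hΓ : (Real.Gamma r : ℂ) ≠ 0 := Complex.ofReal_ne_zero.2 (Real.Gamma_pos_of_pos hr).ne'
  have hreal : ∫ s in Ioi 0, ((s ^ (r - 1) * Real.exp (-(x * s)) : ℝ) : ℂ) =
      ((Real.Gamma r * x ^ (-r) : ℝ) : ℂ) := by
    rw [← integral_rpow_sub_one_mul_exp_neg_mul hr hx]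
    exact integral_ofReal
  simp_rw [cexp_I_sub_mul, ← mul_assoc, ← Complex.ofReal_mul]
  rw [MeasureTheory.integral_mul_const, hreal]
  push_cast
  field_simp

section

variable {φ φ' : ℝ → ℝ} {r : ℝ}

lemma norm_integral_rpow_sub_one_mul_integral_deriv_mul_cexp_le {a b : ℝ} (hr : 0 < r)
    (hφ : ∀ t ∈ uIcc a b, HasDerivAt φ (φ' t) t) (hφ' : ContinuousOn φ' (uIcc a b))
    (ha : 0 < φ a) (hb : 0 < φ b) :
    ‖∫ s in Ioi 0, ∫ t in a..b,
        ((s ^ (r - 1) : ℝ) : ℂ) * ((φ' t : ℂ) * Complex.exp ((Complex.I - s) * φ t))‖ ≤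
      Real.Gamma r * (φ a ^ (-r) + φ b ^ (-r)) := by
  have hinner : ∀ s ∈ Ioi (0 : ℝ),
      ‖∫ t in a..b, ((s ^ (r - 1) : ℝ) : ℂ) * ((φ' t : ℂ) * Complex.exp ((Complex.I - s) * φ t))‖ ≤
        s ^ (r - 1) * Real.exp (-(φ a * s)) + s ^ (r - 1) * Real.exp (-(φ b * s)) := by
    intro s hs
    have hs' : 0 ≤ s ^ (r - 1) := Real.rpow_nonneg (le_of_lt hs) _
    rw [intervalIntegral.integral_const_mul, norm_mul, Complex.norm_real, Real.norm_of_nonneg hs',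
      ← mul_add]
    exact mul_le_mul_of_nonneg_left (norm_integral_deriv_mul_cexp_I_sub_mul_le s hφ hφ') hs'
  have hint_a := integrableOn_rpow_sub_one_mul_exp_neg_mul hr ha
  have hint_b := integrableOn_rpow_sub_one_mul_exp_neg_mul hr hb
  calc _ ≤ ∫ s in Ioi 0,
        (s ^ (r - 1) * Real.exp (-(φ a * s)) + s ^ (r - 1) * Real.exp (-(φ b * s))) :=
        norm_integral_le_of_norm_le (hint_a.add hint_b)
          ((ae_restrict_iff' measurableSet_Ioi).2 (ae_of_all _ hinner))
    _ = _ := by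
        rw [integral_add hint_a hint_b, integral_rpow_sub_one_mul_exp_neg_mul hr ha,
          integral_rpow_sub_one_mul_exp_neg_mul hr hb, mul_add]

lemma integrable_rpow_sub_one_mul_deriv_mul_cexp (hr : 0 < r)
    (hφ : ∀ t, HasDerivAt φ (φ' t) t) (hφ' : Continuous φ') (hφ_pos : ∀ t, 0 < φ t) (a b : ℝ) :
    Integrable (Function.uncurry fun t s : ℝ =>
        ((s ^ (r - 1) : ℝ) : ℂ) * ((φ' t : ℂ) * Complex.exp ((Complex.I - s) * φ t)))
      ((volume.restrict (uIoc a b)).prod (volume.restrict (Ioi 0))) := by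
  have hφc : Continuous φ := continuous_iff_continuousAt.2 fun t => (hφ t).continuousAt
  have hsplit : ∀ t s : ℝ,
      ((s ^ (r - 1) : ℝ) : ℂ) * ((φ' t : ℂ) * Complex.exp ((Complex.I - s) * φ t)) =
        ((s ^ (r - 1) * Real.exp (-(φ t * s)) : ℝ) : ℂ) *
          ((φ' t : ℂ) * Complex.exp (Complex.I * φ t)) := by
    intro t s
    rw [cexp_I_sub_mul]
    push_cast
    ring
  have hnorm : ∀ t, ∫ s in Ioi 0,
      ‖((s ^ (r - 1) : ℝ) : ℂ) * ((φ' t : ℂ) * Complex.exp ((Complex.I - s) * φ t))‖ =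
        Real.Gamma r * φ t ^ (-r) * |φ' t| := by
    intro t
    rw [← integral_rpow_sub_one_mul_exp_neg_mul hr (hφ_pos t), ← MeasureTheory.integral_mul_const]
    refine setIntegral_congr_fun measurableSet_Ioi fun s hs => ?_
    rw [hsplit, norm_mul, norm_mul, Complex.norm_exp_I_mul_ofReal, Complex.norm_real,
      Complex.norm_real, mul_one, Real.norm_of_nonneg
        (mul_nonneg (Real.rpow_nonneg (le_of_lt hs) _) (Real.exp_nonneg _)), Real.norm_eq_abs]
  refine (integrable_prod_iff ?_).2 ⟨ae_of_all _ fun t => ?_, ?_⟩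
  · exact Measurable.aestronglyMeasurable (by unfold Function.uncurry; fun_prop)
  · simp only [Function.uncurry_apply_pair, hsplit]
    exact ((integrableOn_rpow_sub_one_mul_exp_neg_mul hr (hφ_pos t)).ofReal (𝕜 := ℂ)).mul_const _
  · simp only [Function.uncurry_apply_pair, hnorm]
    exact Continuous.integrableOn_uIoc <|
      (continuous_const.mul (hφc.rpow_const fun t => .inl (hφ_pos t).ne')).mul hφ'.abs

theorem norm_integral_deriv_mul_rpow_neg_mul_cexp_I_le (hr : 0 < r)
    (hφ : ∀ t, HasDerivAt φ (φ' t) t) (hφ' : Continuous φ') (hφ_pos : ∀ t, 0 < φ t) (a b : ℝ) :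
    ‖∫ t in a..b, ((φ' t * φ t ^ (-r) : ℝ) : ℂ) * Complex.exp (Complex.I * φ t)‖ ≤
      φ a ^ (-r) + φ b ^ (-r) := by
  have hΓ : 0 < Real.Gamma r := Real.Gamma_pos_of_pos hr
  have hrep : ∀ t, ((φ' t * φ t ^ (-r) : ℝ) : ℂ) * Complex.exp (Complex.I * φ t) =
      ((Real.Gamma r)⁻¹ : ℝ) * ∫ s in Ioi 0,
        ((s ^ (r - 1) : ℝ) : ℂ) * ((φ' t : ℂ) * Complex.exp ((Complex.I - s) * φ t)) := by
    intro t
    simp_rw [mul_left_comm _ (φ' t : ℂ)]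
    rw [MeasureTheory.integral_const_mul, mul_left_comm,
      ← rpow_neg_mul_cexp_I_eq_integral hr (hφ_pos t), Complex.ofReal_mul, mul_assoc]
  calc _ = (Real.Gamma r)⁻¹ * ‖∫ s in Ioi 0, ∫ t in a..b,
        ((s ^ (r - 1) : ℝ) : ℂ) * ((φ' t : ℂ) * Complex.exp ((Complex.I - s) * φ t))‖ := by
        simp_rw [hrep]
        rw [intervalIntegral.integral_const_mul, intervalIntegral_integral_swap
            (integrable_rpow_sub_one_mul_deriv_mul_cexp hr hφ hφ' hφ_pos a b),
          norm_mul, Complex.norm_real, Real.norm_of_nonneg (inv_nonneg.2 hΓ.le)]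
    _ ≤ (Real.Gamma r)⁻¹ * (Real.Gamma r * (φ a ^ (-r) + φ b ^ (-r))) := by
        gcongr
        exact norm_integral_rpow_sub_one_mul_integral_deriv_mul_cexp_le hr (fun t _ => hφ t)
          hφ'.continuousOn (hφ_pos a) (hφ_pos b)
    _ = _ := inv_mul_cancel_left₀ hΓ.ne' _

end

lemma rpow_sub_one_div_mul_mul_exp_rpow_neg {β ρ l r : ℝ} (hβ : 0 < β) (hρr : ρ * r = ρ - l)
    (t : ℝ) :
    β ^ (r - 1) / ρ * (β * Real.exp (ρ * t)) ^ (-r) = Real.exp ((l - ρ) * t) / (ρ * β) := by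
  have hβr : β ^ (r - 1) * β ^ (-r) * β = 1 := by
    rw [← Real.rpow_add hβ, show r - 1 + -r = -1 by ring, Real.rpow_neg_one,
      inv_mul_cancel₀ hβ.ne']
  rw [Real.mul_rpow hβ.le (Real.exp_pos _).le, ← Real.exp_mul,
    show ρ * t * -r = (l - ρ) * t by linear_combination -t * hρr]
  field_simp
  rw [hβr]

lemma exp_mul_eq_rpow_sub_one_div_mul_deriv_mul_rpow_neg {β ρ l r : ℝ} (hβ : 0 < β) (hρ : 0 < ρ)
    (hρr : ρ * r = ρ - l) (t : ℝ) :
    Real.exp (l * t) = β ^ (r - 1) / ρ *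
      (ρ * (β * Real.exp (ρ * t)) * (β * Real.exp (ρ * t)) ^ (-r)) := by
  rw [mul_comm (ρ * _), ← mul_assoc, rpow_sub_one_div_mul_mul_exp_rpow_neg hβ hρr,
    show l * t = (l - ρ) * t + ρ * t by ring, Real.exp_add]
  field_simp

/-- Oscillatory integral bound: for `β, ρ > 0` and `λ < ρ`, there is `D > 0`
(one may take `D = 1/(ρβ)`) such that for all `t₁ < t₂`,
`‖∫_{t₁}^{t₂} e^{λ t} e^{i β e^{ρ t}} dt‖ ≤ D (e^{(λ-ρ)t₁} + e^{(λ-ρ)t₂})`. -/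
theorem oscillatory_integral_bound (β ρ l : ℝ) (hβ : 0 < β) (hρ : 0 < ρ) (hl : l < ρ) :
    ∃ D : ℝ, 0 < D ∧ D = 1 / (ρ * β) ∧
      ∀ t₁ t₂ : ℝ, t₁ < t₂ →
        ‖∫ t in t₁..t₂,
            (Real.exp (l * t) : ℂ) * Complex.exp (Complex.I * β * Real.exp (ρ * t))‖ ≤
          D * (Real.exp ((l - ρ) * t₁) + Real.exp ((l - ρ) * t₂)) := by
  refine ⟨1 / (ρ * β), by positivity, rfl, fun t₁ t₂ _ => ?_⟩
  set r := (ρ - l) / ρ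
  have hr : 0 < r := div_pos (sub_pos.2 hl) hρ
  set φ : ℝ → ℝ := fun t => β * Real.exp (ρ * t)
  have hφ : ∀ t, HasDerivAt φ (ρ * φ t) t := fun t => by
    simpa [φ, mul_comm, mul_left_comm] using ((hasDerivAt_id t).const_mul ρ).exp.const_mul β
  have hρr : ρ * r = ρ - l := mul_div_cancel₀ (ρ - l) hρ.ne'
  have hintegrand : ∀ t,
      (Real.exp (l * t) : ℂ) * Complex.exp (Complex.I * β * Real.exp (ρ * t)) =
        ((β ^ (r - 1) / ρ : ℝ) : ℂ) *
          (((ρ * φ t * φ t ^ (-r) : ℝ) : ℂ) * Complex.exp (Complex.I * φ t)) := fun t => by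
    rw [exp_mul_eq_rpow_sub_one_div_mul_deriv_mul_rpow_neg hβ hρ hρr, Complex.ofReal_mul,
      Complex.ofReal_mul β, mul_assoc Complex.I]
    ring
  simp_rw [hintegrand]
  rw [intervalIntegral.integral_const_mul, norm_mul, Complex.norm_real,
    Real.norm_of_nonneg (by positivity)]
  calc _ ≤ β ^ (r - 1) / ρ * (φ t₁ ^ (-r) + φ t₂ ^ (-r)) := by
        gcongr
        exact norm_integral_deriv_mul_rpow_neg_mul_cexp_I_le hr hφ (by fun_prop)
          (fun t => by positivity) t₁ t₂
    _ = _ := by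
        rw [mul_add, rpow_sub_one_div_mul_mul_exp_rpow_neg hβ hρr,
          rpow_sub_one_div_mul_mul_exp_rpow_neg hβ hρr]
        ring
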